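/- arXiv:1703.05843 — 5 statements merged into one kernel-verified Lean document; each statement's English description precedes it below -/
import Mathlib

section
/- For every even natural number n, the 2-colored quantum numbers satisfy [2]_y·[n]_x = [2]_x·[n]_y in ℤ[x,y] (that is, y·[n]_x = x·[n]_y). -/
noncomputable section

/-- The generic 2-colored quantum numbers: `a` plays the role of this color's `[2]`,
`b` plays the role of the other color's `[2]`, so that
`[0] = 0`, `[1] = 1`, `[2] = a`, and `[n] = a·[n-1] - [n-2]` for even `n ≥ 2`,
`[n] = b·[n-1] - [n-2]` for odd `n ≥ 2`. -/
def qq {R : Type*} [CommRing R] (a b : R) : ℕ → R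
  | 0 => 0
  | 1 => 1
  | n + 2 => (if n % 2 = 0 then a else b) * qq a b (n + 1) - qq a b n

/-- The 2-colored quantum number `[n]_x ∈ ℤ[x,y]` (where `x = X 0` and `y = X 1`). -/
def Qx : ℕ → MvPolynomial (Fin 2) ℤ := qq (MvPolynomial.X 0) (MvPolynomial.X 1)

/-- The 2-colored quantum number `[n]_y ∈ ℤ[x,y]` (where `x = X 0` and `y = X 1`). -/
def Qy : ℕ → MvPolynomial (Fin 2) ℤ := qq (MvPolynomial.X 1) (MvPolynomial.X 0)

lemma qq_aux {R : Type*} [CommRing R] (a b : R) (n : ℕ) :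
    b * qq a b (2*n) = a * qq b a (2*n) ∧ qq a b (2*n+1) = qq b a (2*n+1) := by
  induction n with
  | zero => simp [qq]
  | succ k ih =>
    have h2 : 2*(k+1) = 2*k + 2 := by ring
    have h3 : 2*(k+1)+1 = (2*k+1) + 2 := by ring
    have e1 : qq a b (2*k+2) = a * qq a b (2*k+1) - qq a b (2*k) := by
      rw [show qq a b (2*k+2) = (if (2*k) % 2 = 0 then a else b) * qq a b (2*k+1) - qq a b (2*k) from rfl]
      simp
    have e1' : qq b a (2*k+2) = b * qq b a (2*k+1) - qq b a (2*k) := by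
      rw [show qq b a (2*k+2) = (if (2*k) % 2 = 0 then b else a) * qq b a (2*k+1) - qq b a (2*k) from rfl]
      simp
    have heven : b * qq a b (2*(k+1)) = a * qq b a (2*(k+1)) := by
      rw [h2, e1, e1']
      rw [mul_sub, mul_sub, ih.2, ih.1]
      ring
    refine ⟨heven, ?_⟩
    have e2 : qq a b (2*k+3) = b * qq a b (2*k+2) - qq a b (2*k+1) := by
      rw [show qq a b (2*k+3) = (if (2*k+1) % 2 = 0 then a else b) * qq a b (2*k+2) - qq a b (2*k+1) from rfl]
      simp [Nat.succ_mod_two_eq_zero_iff, Nat.mul_mod_right]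
    have e2' : qq b a (2*k+3) = a * qq b a (2*k+2) - qq b a (2*k+1) := by
      rw [show qq b a (2*k+3) = (if (2*k+1) % 2 = 0 then b else a) * qq b a (2*k+2) - qq b a (2*k+1) from rfl]
      simp [Nat.succ_mod_two_eq_zero_iff, Nat.mul_mod_right]
    rw [h2] at heven
    rw [show 2*(k+1)+1 = 2*k+3 from by ring, e2, e2', heven, ih.2]

/-- For every even `n`, `[2]_y·[n]_x = [2]_x·[n]_y` (that is, `y·[n]_x = x·[n]_y`)
in `ℤ[x,y]`. -/
theorem two_color_quantum_even_eq (n : ℕ) (hn : Even n) :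
    Qy 2 * Qx n = Qx 2 * Qy n := by
  obtain ⟨k, hk⟩ := hn
  have hq2 : ∀ (a b : MvPolynomial (Fin 2) ℤ), qq a b 2 = a := by
    intro a b
    rw [show qq a b 2 = (if 0 % 2 = 0 then a else b) * qq a b 1 - qq a b 0 from rfl]
    simp [qq]
  have := qq_aux (MvPolynomial.X 0) (MvPolynomial.X 1 : MvPolynomial (Fin 2) ℤ) k
  simp only [Qx, Qy, hq2, hk, show k + k = 2*k from by ring]
  exact this.1
end
end

section
/- For all natural numbers n and m with n ≡ m (mod 2), the 2-colored quantum numbers satisfy [n]_x·[m]_y = [m]_x·[n]_y in ℤ[x,y]. -/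
noncomputable section

lemma qq_key {R : Type*} [CommRing R] (a b : R) :
    ∀ n : ℕ, (n % 2 = 1 → qq a b n = qq b a n) ∧
      (n % 2 = 0 → b * qq a b n = a * qq b a n) := by
  intro n
  induction n using Nat.strong_induction_on with
  | _ n ih =>
    match n with
    | 0 => simp [qq]
    | 1 => simp [qq]
    | n + 2 =>
      have h1 := ih (n + 1) (by omega)
      have h0 := ih n (by omega)
      rcases Nat.even_or_odd n with he | ho
      · have hn : n % 2 = 0 := Nat.even_iff.mp he
        refine ⟨fun h => by omega, fun _ => ?_⟩
        rw [qq, qq, if_pos hn, if_pos hn]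
        linear_combination a * b * h1.1 (by omega) - h0.2 hn
      · have hn : n % 2 = 1 := Nat.odd_iff.mp ho
        refine ⟨fun _ => ?_, fun h => by omega⟩
        rw [qq, qq, if_neg (by omega), if_neg (by omega)]
        linear_combination h1.2 (by omega) - h0.1 hn

/-- For all `n ≡ m (mod 2)`, `[n]_x·[m]_y = [m]_x·[n]_y` in `ℤ[x,y]`. -/
theorem two_color_quantum_product_same_parity (n m : ℕ) (h : n % 2 = m % 2) :
    Qx n * Qy m = Qx m * Qy n := by
  set x : MvPolynomial (Fin 2) ℤ := MvPolynomial.X 0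
  set y : MvPolynomial (Fin 2) ℤ := MvPolynomial.X 1
  rcases Nat.even_or_odd n with he | ho
  · have hn : n % 2 = 0 := Nat.even_iff.mp he
    have hm : m % 2 = 0 := by omega
    have e1 : y * Qx n = x * Qy n := (qq_key x y n).2 hn
    have e2 : y * Qx m = x * Qy m := (qq_key x y m).2 hm
    have hxy : (x * y : MvPolynomial (Fin 2) ℤ) ≠ 0 := by
      simp [x, y, MvPolynomial.X_ne_zero]
    apply mul_left_cancel₀ hxy
    calc x * y * (Qx n * Qy m) = (y * Qx n) * (x * Qy m) := by ring
      _ = (x * Qy n) * (y * Qx m) := by rw [e1, e2]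
      _ = x * y * (Qx m * Qy n) := by ring
  · have hn : n % 2 = 1 := Nat.odd_iff.mp ho
    have hm : m % 2 = 1 := by omega
    have e1 : Qx n = Qy n := (qq_key x y n).1 hn
    have e2 : Qx m = Qy m := (qq_key x y m).1 hm
    rw [e1, e2]; ring
end
end

section
/- (2-colored Clebsch–Gordan formula, equal parities.) For all natural numbers n ≥ m ≥ 0 with n ≡ m (mod 2), one has [n]_x·[m]_y = Σ [i]_x = Σ [i]_y in ℤ[x,y], where both sums run over the odd integers i with n−m+1 ≤ i ≤ n+m−1. -/
noncomputable section

variable {R : Type*} [CommRing R]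


lemma qq_add_two (a b : R) (n : ℕ) :
    qq a b (n + 2) = (if n % 2 = 0 then a else b) * qq a b (n + 1) - qq a b n := by
  rfl

/-- companion sequence: `qq a b (2j) = a * qE a b j`. -/
def qE (a b : R) : ℕ → R
  | 0 => 0
  | j + 1 => qq a b (2*j+1) - qE a b j

lemma qq_even (a b : R) : ∀ j, qq a b (2*j) = a * qE a b j
  | 0 => by simp [qq, qE]
  | j+1 => by
    have h : 2*(j+1) = (2*j) + 2 := by ring
    rw [h, qq_add_two]
    rw [if_pos (by omega : (2*j) % 2 = 0)]
    rw [qq_even a b j]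
    show a * qq a b (2*j+1) - a * qE a b j = a * qE a b (j+1)
    rw [show qE a b (j+1) = qq a b (2*j+1) - qE a b j from rfl]
    ring

lemma qq_odd_symm_aux (a b : R) : ∀ j,
    qq a b (2*j+1) = qq b a (2*j+1) ∧ qE a b j = qE b a j
  | 0 => by norm_num [qq, qE]
  | j+1 => by
    obtain ⟨h1, h2⟩ := qq_odd_symm_aux a b j
    have hE : qE a b (j+1) = qE b a (j+1) := by
      rw [show qE a b (j+1) = qq a b (2*j+1) - qE a b j from rfl,
        show qE b a (j+1) = qq b a (2*j+1) - qE b a j from rfl, h1, h2]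
    refine ⟨?_, hE⟩
    have ha : 2*(j+1)+1 = (2*j+1)+2 := by ring
    rw [ha, qq_add_two a b (2*j+1), qq_add_two b a (2*j+1)]
    have hodd : ¬ (2*j+1) % 2 = 0 := by omega
    rw [if_neg hodd, if_neg hodd]
    have hb : 2*j+1+1 = 2*(j+1) := by ring
    rw [hb, qq_even, qq_even, hE, h1]
    ring

lemma qq_odd_symm (a b : R) (j : ℕ) : qq a b (2*j+1) = qq b a (2*j+1) :=
  (qq_odd_symm_aux a b j).1

lemma qE_symm (a b : R) (j : ℕ) : qE a b j = qE b a j :=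
  (qq_odd_symm_aux a b j).2

lemma qq_odd_symm' (a b : R) {k : ℕ} (hk : k % 2 = 1) : qq a b k = qq b a k := by
  obtain ⟨j, rfl⟩ : ∃ j, k = 2*j+1 := ⟨k/2, by omega⟩
  exact qq_odd_symm a b j

lemma qq_wronskian_step (a b : R) (n m : ℕ) :
    qq a b (n+1) * qq b a (m+2) - qq b a (n+2) * qq a b (m+1)
      = qq b a n * qq a b (m+1) - qq a b (n+1) * qq b a m := by
  rw [qq_add_two b a m, qq_add_two b a n]
  have key : (if m % 2 = 0 then b else a) * (qq a b (n+1) * qq b a (m+1))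
      = (if n % 2 = 0 then b else a) * (qq b a (n+1) * qq a b (m+1)) := by
    rcases Nat.mod_two_eq_zero_or_one n with hn | hn <;>
      rcases Nat.mod_two_eq_zero_or_one m with hm | hm
    · obtain ⟨s, rfl⟩ : ∃ s, n = 2*s := ⟨n/2, by omega⟩
      obtain ⟨t, rfl⟩ : ∃ t, m = 2*t := ⟨m/2, by omega⟩
      rw [if_pos hm, if_pos hn, qq_odd_symm a b s, qq_odd_symm a b t]
    · obtain ⟨s, rfl⟩ : ∃ s, n = 2*s := ⟨n/2, by omega⟩
      obtain ⟨t, rfl⟩ : ∃ t, m = 2*t+1 := ⟨m/2, by omega⟩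
      rw [if_neg (by omega), if_pos hn, qq_odd_symm a b s]
      have h1 : 2*t+1+1 = 2*(t+1) := by ring
      rw [h1, qq_even, qq_even, qE_symm a b (t+1)]
      ring
    · obtain ⟨s, rfl⟩ : ∃ s, n = 2*s+1 := ⟨n/2, by omega⟩
      obtain ⟨t, rfl⟩ : ∃ t, m = 2*t := ⟨m/2, by omega⟩
      rw [if_pos hm, if_neg (by omega), qq_odd_symm a b t]
      have h1 : 2*s+1+1 = 2*(s+1) := by ring
      rw [h1, qq_even, qq_even, qE_symm a b (s+1)]
      ring
    · obtain ⟨s, rfl⟩ : ∃ s, n = 2*s+1 := ⟨n/2, by omega⟩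
      obtain ⟨t, rfl⟩ : ∃ t, m = 2*t+1 := ⟨m/2, by omega⟩
      rw [if_neg (by omega), if_neg (by omega)]
      have h1 : 2*s+1+1 = 2*(s+1) := by ring
      have h2 : 2*t+1+1 = 2*(t+1) := by ring
      rw [h1, h2, qq_even, qq_even, qq_even, qq_even,
        qE_symm a b (s+1), qE_symm a b (t+1)]
      ring
  linear_combination key

lemma qq_wronskian (m : ℕ) : ∀ (a b : R) (n : ℕ), m ≤ n →
    qq a b n * qq b a (m+1) - qq b a (n+1) * qq a b m
      = if n % 2 = 0 then qq a b (n-m) else qq b a (n-m) := by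
  induction m with
  | zero =>
    intro a b n _
    show qq a b n * qq b a 1 - qq b a (n+1) * qq a b 0 = _
    rw [show (qq b a 1 : R) = 1 from rfl, show (qq a b 0 : R) = 0 from rfl, Nat.sub_zero]
    rcases Nat.mod_two_eq_zero_or_one n with hn | hn
    · rw [if_pos hn]; ring
    · rw [if_neg (by omega), qq_odd_symm' a b hn]; ring
  | succ m ih =>
    intro a b n h
    obtain ⟨n0, rfl⟩ : ∃ n0, n = n0 + 1 := ⟨n-1, by omega⟩
    rw [qq_wronskian_step a b n0 m, ih b a n0 (by omega)]
    have hnm : n0 + 1 - (m+1) = n0 - m := by omega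
    rw [hnm]
    rcases Nat.mod_two_eq_zero_or_one n0 with hn | hn
    · rw [if_pos hn, if_neg (by omega)]
    · rw [if_neg (by omega), if_pos (by omega)]

lemma qq_sum (m : ℕ) : ∀ (a b : R) (n : ℕ), m ≤ n →
    qq a b n * qq b a m = ∑ j ∈ Finset.range m,
      (if n % 2 = 0 then qq a b (n - m + 1 + 2*j) else qq b a (n - m + 1 + 2*j)) := by
  induction m with
  | zero =>
    intro a b n _
    simp [qq]
  | succ m ih =>
    intro a b n h
    have step := qq_wronskian m a b n (by omega)
    have hstep : qq a b n * qq b a (m+1) = qq b a (n+1) * qq a b m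
        + (if n % 2 = 0 then qq a b (n-m) else qq b a (n-m)) := by
      linear_combination step
    rw [hstep, ih b a (n+1) (by omega), Finset.sum_range_succ']
    congr 1
    · refine Finset.sum_congr rfl fun j hj => ?_
      have hi : n + 1 - m + 1 + 2*j = n - (m+1) + 1 + 2*(j+1) := by omega
      rw [hi]
      rcases Nat.mod_two_eq_zero_or_one n with hn | hn
      · have h1 : ¬ (n+1) % 2 = 0 := by omega
        rw [if_pos hn, if_neg h1]
      · have h1 : ¬ n % 2 = 0 := by omega
        have h2 : (n+1) % 2 = 0 := by omega
        rw [if_neg h1, if_pos h2]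
    · have hi : n - (m+1) + 1 + 2*0 = n - m := by omega
      rw [hi]

/-- 2-colored Clebsch–Gordan formula, equal parities: for `n ≥ m ≥ 0` with
`n ≡ m (mod 2)`, `[n]_x·[m]_y = Σ [i]_x = Σ [i]_y`, the sums running over the odd
`i` with `n−m+1 ≤ i ≤ n+m−1`. -/
theorem two_color_clebsch_gordan_same_parity (n m : ℕ) (hmn : m ≤ n) (h : n % 2 = m % 2) :
    Qx n * Qy m
        = ∑ i ∈ (Finset.Icc (n - m + 1) (n + m - 1)).filter (fun i => Odd i), Qx i ∧
    Qx n * Qy m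
        = ∑ i ∈ (Finset.Icc (n - m + 1) (n + m - 1)).filter (fun i => Odd i), Qy i := by
  have hset : (Finset.Icc (n - m + 1) (n + m - 1)).filter (fun i => Odd i)
      = (Finset.range m).image (fun j => n - m + 1 + 2*j) := by
    ext i
    simp only [Finset.mem_filter, Finset.mem_Icc, Finset.mem_image, Finset.mem_range,
      Nat.odd_iff]
    constructor
    · rintro ⟨⟨h1, h2⟩, h3⟩
      exact ⟨(i - (n - m + 1))/2, by omega, by omega⟩
    · rintro ⟨j, hj, rfl⟩
      omega
  have hinj : ∀ x ∈ Finset.range m, ∀ y ∈ Finset.range m,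
      n - m + 1 + 2*x = n - m + 1 + 2*y → x = y := fun x _ y _ hxy => by omega
  have hQ : ∀ j, Qx (n - m + 1 + 2*j) = Qy (n - m + 1 + 2*j) := fun j =>
    qq_odd_symm' _ _ (by omega)
  have key : Qx n * Qy m = ∑ j ∈ Finset.range m, Qx (n - m + 1 + 2*j) := by
    show qq (MvPolynomial.X 0) (MvPolynomial.X 1) n
        * qq (MvPolynomial.X 1) (MvPolynomial.X 0) m = _
    rw [qq_sum m (MvPolynomial.X 0) (MvPolynomial.X 1) n hmn]
    refine Finset.sum_congr rfl fun j hj => ?_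
    rcases Nat.mod_two_eq_zero_or_one n with hn | hn
    · rw [if_pos hn]; rfl
    · have h1 : ¬ n % 2 = 0 := by omega
      rw [if_neg h1]
      exact (qq_odd_symm' _ _ (by omega)).symm
  constructor
  · rw [key, hset, Finset.sum_image hinj]
  · rw [key, hset, Finset.sum_image hinj]
    exact Finset.sum_congr rfl fun j _ => hQ j
end
end

section
/- (2-colored Clebsch–Gordan formula, different parities.) For all natural numbers n ≥ m ≥ 0 with n ≢ m (mod 2), one has [n]_x·[m]_x = Σ [i]_x and [n]_y·[m]_y = Σ [i]_y in ℤ[x,y], where both sums run over the even integers i with n−m+1 ≤ i ≤ n+m−1. -/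
noncomputable section

section Aux

variable {R : Type*} [CommRing R] (a b : R)

lemma qq_swap : ∀ m : ℕ, (m % 2 = 1 → qq a b m = qq b a m) ∧
    (m % 2 = 0 → b * qq a b m = a * qq b a m)
  | 0 => ⟨fun h => by omega, fun _ => by simp [qq]⟩
  | 1 => ⟨fun _ => rfl, fun h => by omega⟩
  | (j+2) => by
      have h1 := qq_swap (j+1)
      have h0 := qq_swap j
      have eab : qq a b (j+2) = (if j % 2 = 0 then a else b) * qq a b (j+1) - qq a b j := by
        rw [qq]
      have eba : qq b a (j+2) = (if j % 2 = 0 then b else a) * qq b a (j+1) - qq b a j := by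
        rw [qq]
      constructor
      · intro h
        have hj : j % 2 = 1 := by omega
        rw [eab, eba, if_neg (by omega), if_neg (by omega), h0.1 hj, h1.2 (by omega)]
      · intro h
        have hj : j % 2 = 0 := by omega
        rw [eab, eba, if_pos hj, if_pos hj]
        have e1 := h1.1 (by omega)
        have e0 := h0.2 hj
        linear_combination (a * b) * e1 - e0

lemma qq_a_mul (k : ℕ) (h : k % 2 = 0) :
    a * qq a b (k + 1) = qq a b (k + 2) + qq a b k := by
  rw [qq, if_pos h]; ring

lemma qq_b_mul (k : ℕ) (h : k % 2 = 1) :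
    b * qq a b (k + 1) = qq a b (k + 2) + qq a b k := by
  rw [qq, if_neg (by omega)]; ring

lemma telescope (f : ℕ → R) (j : ℕ) :
    (∑ k ∈ Finset.range (j+1), (f (k+1) + f k)) - ∑ k ∈ Finset.range j, f (k+1)
      = ∑ k ∈ Finset.range (j+2), f k := by
  rw [Finset.sum_add_distrib, Finset.sum_range_succ (fun k => f (k+1)) j,
    Finset.sum_range_succ f (j+1)]
  ring

lemma key : ∀ (m n : ℕ), m ≤ n →
    (((n + m) % 2 = 1 →
        qq a b n * qq a b m = ∑ k ∈ Finset.range m, qq a b (n - m + 1 + 2*k)) ∧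
     ((n + m) % 2 = 0 →
        qq a b n * qq b a m = ∑ k ∈ Finset.range m, qq a b (n - m + 1 + 2*k)))
  | 0, n, _ => by
      constructor <;> intro h <;> simp [qq]
  | 1, n, hn => by
      constructor <;> intro h <;>
        rw [Finset.sum_range_one, show n - 1 + 1 + 2*0 = n by omega] <;> simp [qq]
  | (j+2), n, hn => by
      obtain ⟨N, rfl⟩ : ∃ N, n = N + j + 2 := ⟨n - (j+2), by omega⟩
      have hn' : N + j + 2 = N + (j + 2) := by ring
      have K1 := key (j+1) (N + j + 2) (by omega)
      have K0 := key j (N + j + 2) (by omega)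
      have eab : qq a b (j+2) = (if j % 2 = 0 then a else b) * qq a b (j+1) - qq a b j := by
        rw [qq]
      have eba : qq b a (j+2) = (if j % 2 = 0 then b else a) * qq b a (j+1) - qq b a j := by
        rw [qq]
      constructor
      · intro h
        have hN : N % 2 = 1 := by omega
        -- coefficient claim
        have hc : (if j % 2 = 0 then a else b) * qq a b (j+1) = a * qq b a (j+1) := by
          rcases Nat.mod_two_eq_zero_or_one j with hj | hj
          · rw [if_pos hj, (qq_swap a b (j+1)).1 (by omega)]
          · rw [if_neg (by omega)]
            exact (qq_swap a b (j+1)).2 (by omega)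
        have S1 := K1.2 (by omega)
        have D0 := K0.1 (by omega)
        rw [show N + j + 2 - (j+1) + 1 = N + 2 by omega] at S1
        rw [show N + j + 2 - j + 1 = N + 3 by omega] at D0
        rw [show N + j + 2 - (j+2) + 1 = N + 1 by omega]
        calc qq a b (N+j+2) * qq a b (j+2)
            = a * (qq a b (N+j+2) * qq b a (j+1)) - qq a b (N+j+2) * qq a b j := by
              rw [eab, hc]; ring
          _ = a * (∑ k ∈ Finset.range (j+1), qq a b (N + 2 + 2*k))
              - ∑ k ∈ Finset.range j, qq a b (N + 3 + 2*k) := by rw [S1, D0]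
          _ = (∑ k ∈ Finset.range (j+1),
                (qq a b (N + 1 + 2*(k+1)) + qq a b (N + 1 + 2*k)))
              - ∑ k ∈ Finset.range j, qq a b (N + 1 + 2*(k+1)) := by
              rw [Finset.mul_sum]
              congr 1
              · refine Finset.sum_congr rfl (fun k _ => ?_)
                rw [show N + 2 + 2*k = (N + 1 + 2*k) + 1 by ring,
                    show N + 1 + 2*(k+1) = (N + 1 + 2*k) + 2 by ring]
                exact qq_a_mul a b (N + 1 + 2*k) (by omega)
              · exact Finset.sum_congr rfl (fun k _ => by congr 1; ring)
          _ = ∑ k ∈ Finset.range (j+2), qq a b (N + 1 + 2*k) :=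
              telescope (fun k => qq a b (N + 1 + 2*k)) j
      · intro h
        have hN : N % 2 = 0 := by omega
        have hc : (if j % 2 = 0 then b else a) * qq b a (j+1) = b * qq a b (j+1) := by
          rcases Nat.mod_two_eq_zero_or_one j with hj | hj
          · rw [if_pos hj, (qq_swap a b (j+1)).1 (by omega)]
          · rw [if_neg (by omega)]
            exact (qq_swap b a (j+1)).2 (by omega)
        have D1 := K1.1 (by omega)
        have S0 := K0.2 (by omega)
        rw [show N + j + 2 - (j+1) + 1 = N + 2 by omega] at D1
        rw [show N + j + 2 - j + 1 = N + 3 by omega] at S0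
        rw [show N + j + 2 - (j+2) + 1 = N + 1 by omega]
        calc qq a b (N+j+2) * qq b a (j+2)
            = b * (qq a b (N+j+2) * qq a b (j+1)) - qq a b (N+j+2) * qq b a j := by
              rw [eba, hc]; ring
          _ = b * (∑ k ∈ Finset.range (j+1), qq a b (N + 2 + 2*k))
              - ∑ k ∈ Finset.range j, qq a b (N + 3 + 2*k) := by rw [D1, S0]
          _ = (∑ k ∈ Finset.range (j+1),
                (qq a b (N + 1 + 2*(k+1)) + qq a b (N + 1 + 2*k)))
              - ∑ k ∈ Finset.range j, qq a b (N + 1 + 2*(k+1)) := by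
              rw [Finset.mul_sum]
              congr 1
              · refine Finset.sum_congr rfl (fun k _ => ?_)
                rw [show N + 2 + 2*k = (N + 1 + 2*k) + 1 by ring,
                    show N + 1 + 2*(k+1) = (N + 1 + 2*k) + 2 by ring]
                exact qq_b_mul a b (N + 1 + 2*k) (by omega)
              · exact Finset.sum_congr rfl (fun k _ => by congr 1; ring)
          _ = ∑ k ∈ Finset.range (j+2), qq a b (N + 1 + 2*k) :=
              telescope (fun k => qq a b (N + 1 + 2*k)) j

lemma filter_even_sum (f : ℕ → R) (s m : ℕ) (hs : s % 2 = 1) :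
    ∑ i ∈ (Finset.Icc (s+1) (s+2*m-1)).filter (fun i => Even i), f i
      = ∑ k ∈ Finset.range m, f (s+1+2*k) := by
  have himg : (Finset.Icc (s+1) (s+2*m-1)).filter (fun i => Even i)
      = (Finset.range m).image (fun k => s+1+2*k) := by
    ext i
    simp only [Finset.mem_filter, Finset.mem_Icc, Finset.mem_image, Finset.mem_range,
      Nat.even_iff]
    constructor
    · rintro ⟨⟨h1, h2⟩, h3⟩
      exact ⟨(i - s - 1) / 2, by omega, by omega⟩
    · rintro ⟨k, hk, rfl⟩
      omega
  rw [himg, Finset.sum_image (fun x _ y _ hxy => by omega)]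

end Aux

/-- 2-colored Clebsch–Gordan formula, different parities: for `n ≥ m ≥ 0` with
`n ≢ m (mod 2)`, `[n]_x·[m]_x = Σ [i]_x` and `[n]_y·[m]_y = Σ [i]_y`, the sums
running over the even `i` with `n−m+1 ≤ i ≤ n+m−1`. -/
theorem two_color_clebsch_gordan_different_parity (n m : ℕ) (hmn : m ≤ n) (h : n % 2 ≠ m % 2) :
    Qx n * Qx m
        = ∑ i ∈ (Finset.Icc (n - m + 1) (n + m - 1)).filter (fun i => Even i), Qx i ∧
    Qy n * Qy m
        = ∑ i ∈ (Finset.Icc (n - m + 1) (n + m - 1)).filter (fun i => Even i), Qy i := by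
  have hpar : (n + m) % 2 = 1 := by omega
  have hs : (n - m) % 2 = 1 := by omega
  have hup : n + m - 1 = (n - m) + 2*m - 1 := by omega
  constructor
  · rw [hup, show n - m + 1 = (n - m) + 1 from rfl,
      filter_even_sum Qx (n - m) m hs]
    exact (key (MvPolynomial.X 0) (MvPolynomial.X 1) m n hmn).1 hpar
  · rw [hup, show n - m + 1 = (n - m) + 1 from rfl,
      filter_even_sum Qy (n - m) m hs]
    exact (key (MvPolynomial.X 1) (MvPolynomial.X 0) m n hmn).1 hpar
end
end

section
/- For every natural number n ≥ 1, the 2-colored quantum numbers satisfy [n]_x·[n]_y = [n−1]_x·[n+1]_y + 1 and [n]_x·[n]_y = [n−1]_y·[n+1]_x + 1 in ℤ[x,y]. -/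
noncomputable section

lemma qq_square_id {R : Type*} [CommRing R] (a b : R) (n : ℕ) :
    qq a b (n + 1) * qq b a (n + 1) = qq a b n * qq b a (n + 2) + 1 := by
  induction n with
  | zero => simp [qq]
  | succ n ih =>
    have h2 : qq a b (n + 2) = (if n % 2 = 0 then a else b) * qq a b (n + 1) - qq a b n := rfl
    have h3 : qq b a (n + 3) =
        (if (n + 1) % 2 = 0 then b else a) * qq b a (n + 2) - qq b a (n + 1) := rfl
    have hpar : (if (n + 1) % 2 = 0 then b else a) = (if n % 2 = 0 then a else b) := by
      rcases Nat.mod_two_eq_zero_or_one n with h | h <;> simp [Nat.add_mod, h]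
    rw [h2, h3, hpar]
    linear_combination ih

/-- For every `n ≥ 1`, `[n]_x·[n]_y = [n−1]_x·[n+1]_y + 1 = [n−1]_y·[n+1]_x + 1`
in `ℤ[x,y]`. -/
theorem two_color_quantum_square_identity (n : ℕ) (hn : 1 ≤ n) :
    Qx n * Qy n = Qx (n - 1) * Qy (n + 1) + 1 ∧
    Qx n * Qy n = Qy (n - 1) * Qx (n + 1) + 1 := by
  obtain ⟨m, rfl⟩ := Nat.exists_eq_add_of_le hn
  simp only [Nat.add_sub_cancel_left, Qx, Qy, Nat.add_comm 1 m]
  exact ⟨qq_square_id _ _ m, by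
    rw [mul_comm]; exact qq_square_id _ _ m⟩
end
end
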